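/- arXiv:1802.04923 — 6 statements merged into one kernel-verified Lean document; each statement's English description precedes it below -/
import Mathlib

section
/- (Proposition 1) Let M ≥ 1, let b ∈ ℂ^M have |b_k| = 1 for all k, and let φ ∈ ℝ be nondegenerate. Then the equivalent transmitted symbol s = (1/√M)·Σ_{k=1}^{M} conj(b_k)·x(φ)_k satisfies |s| > √(M/2). -/
/-!
Rotating by `conj (e^{iφ})` does not change the modulus, and turns the `k`-th summand into
`(1/√2)·conj(c_k)·sign(c_k)` with `c_k = b_k e^{iφ}`, whose real part is
`(|Re c_k| + |Im c_k|)/√2`. For a unit complex number with both parts nonzero,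
`|Re c| + |Im c| > |c| = 1`, so the rotated sum has real part `> M/√2`.
-/

/-- `sgn t = 1` if `t > 0` and `-1` otherwise. -/
noncomputable def sgn (t : ℝ) : ℝ := if 0 < t then 1 else -1

/-- One-bit complex sign: `sign(c) = sgn(Re c) + i·sgn(Im c)`. -/
noncomputable def csign (c : ℂ) : ℂ := (sgn c.re : ℂ) + (sgn c.im : ℂ) * Complex.I

/-- `φ` is nondegenerate for `b` if `Re(b_k e^{iφ}) ≠ 0` and `Im(b_k e^{iφ}) ≠ 0` for all `k`. -/
def Nondeg {M : ℕ} (b : Fin M → ℂ) (φ : ℝ) : Prop :=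
  ∀ k, (b k * Complex.exp (φ * Complex.I)).re ≠ 0 ∧
    (b k * Complex.exp (φ * Complex.I)).im ≠ 0

/-- The one-bit beamforming vector `x(φ)_k = (1/√2)·sign(b_k e^{iφ})`. -/
noncomputable def xphi {M : ℕ} (b : Fin M → ℂ) (φ : ℝ) : Fin M → ℂ :=
  fun k => ((1 / Real.sqrt 2 : ℝ) : ℂ) * csign (b k * Complex.exp (φ * Complex.I))

open ComplexConjugate

lemma sgn_mul_self (a : ℝ) : a * sgn a = |a| := by
  unfold sgn
  split_ifs with h
  · rw [mul_one, abs_of_pos h]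
  · rw [mul_neg_one, abs_of_nonpos (not_lt.mp h)]

lemma re_conj_mul_csign (c : ℂ) : (conj c * csign c).re = |c.re| + |c.im| := by
  simp [csign, Complex.mul_re, sgn_mul_self]

lemma norm_lt_abs_re_add_abs_im {c : ℂ} (hre : c.re ≠ 0) (him : c.im ≠ 0) :
    ‖c‖ < |c.re| + |c.im| := by
  rw [Complex.norm_def, Real.sqrt_lt' (by positivity), Complex.normSq_apply]
  nlinarith [abs_mul_abs_self c.re, abs_mul_abs_self c.im,
    mul_pos (abs_pos.mpr hre) (abs_pos.mpr him)]

lemma sum_norm_lt_re_sum_conj_mul_csign {ι : Type*} [Fintype ι] [Nonempty ι] (c : ι → ℂ)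
    (hc : ∀ k, (c k).re ≠ 0 ∧ (c k).im ≠ 0) :
    ∑ k, ‖c k‖ < (∑ k, conj (c k) * csign (c k)).re := by
  rw [Complex.re_sum]
  refine Finset.sum_lt_sum_of_nonempty Finset.univ_nonempty fun k _ => ?_
  rw [re_conj_mul_csign]
  exact norm_lt_abs_re_add_abs_im (hc k).1 (hc k).2

lemma conj_exp_mul_sum_conj_mul_xphi {M : ℕ} (b : Fin M → ℂ) (φ : ℝ) :
    conj (Complex.exp (φ * Complex.I)) * ∑ k, conj (b k) * xphi b φ k =
      ((1 / Real.sqrt 2 : ℝ) : ℂ) * ∑ k, conj (b k * Complex.exp (φ * Complex.I)) *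
        csign (b k * Complex.exp (φ * Complex.I)) := by
  simp only [Finset.mul_sum, xphi, map_mul]
  exact Finset.sum_congr rfl fun k _ => by ring

lemma div_sqrt_two_lt_norm_sum_conj_mul_xphi {M : ℕ} (hM : 1 ≤ M) (b : Fin M → ℂ)
    (hb : ∀ k, ‖b k‖ = 1) (φ : ℝ) (hφ : Nondeg b φ) :
    M / Real.sqrt 2 < ‖∑ k, conj (b k) * xphi b φ k‖ := by
  have : Nonempty (Fin M) := ⟨⟨0, hM⟩⟩
  have hu : ‖Complex.exp (φ * Complex.I)‖ = 1 := Complex.norm_exp_ofReal_mul_I φ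
  have hnorm : ∀ k, ‖b k * Complex.exp (φ * Complex.I)‖ = 1 := fun k => by
    rw [norm_mul, hb k, hu, one_mul]
  calc (M : ℝ) / Real.sqrt 2
      = 1 / Real.sqrt 2 * ∑ k, ‖b k * Complex.exp (φ * Complex.I)‖ := by
        simp only [hnorm, Finset.sum_const, Finset.card_univ, Fintype.card_fin, nsmul_eq_mul,
          mul_one]
        ring
    _ < (conj (Complex.exp (φ * Complex.I)) * ∑ k, conj (b k) * xphi b φ k).re := by
        rw [conj_exp_mul_sum_conj_mul_xphi, Complex.re_ofReal_mul]
        gcongr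
        exact sum_norm_lt_re_sum_conj_mul_csign _ hφ
    _ ≤ ‖conj (Complex.exp (φ * Complex.I)) * ∑ k, conj (b k) * xphi b φ k‖ :=
        Complex.re_le_norm _
    _ = ‖∑ k, conj (b k) * xphi b φ k‖ := by rw [norm_mul, Complex.norm_conj, hu, one_mul]

/-- **Proposition 1.** For nondegenerate `φ`, the equivalent transmitted symbol
`s = (1/√M)·Σ_k conj(b_k)·x(φ)_k` satisfies `|s| > √(M/2)`. -/
theorem abs_symbol_xphi_gt (M : ℕ) (hM : 1 ≤ M) (b : Fin M → ℂ)
    (hb : ∀ k, ‖b k‖ = 1) (φ : ℝ) (hφ : Nondeg b φ) :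
    ‖((1 / Real.sqrt M : ℝ) : ℂ) * ∑ k, (starRingEnd ℂ) (b k) * xphi b φ k‖
      > Real.sqrt (M / 2) := by
  have hsymbol : Real.sqrt (M / 2) = 1 / Real.sqrt M * (M / Real.sqrt 2) := by
    rw [Real.sqrt_div' _ zero_le_two, ← Real.div_sqrt (x := M)]
    field_simp
    exact (Real.sq_sqrt (Nat.cast_nonneg M)).symm
  rw [norm_mul, Complex.norm_real, Real.norm_of_nonneg (by positivity), hsymbol]
  exact mul_lt_mul_of_pos_left (div_sqrt_two_lt_norm_sum_conj_mul_xphi hM b hb φ hφ)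
    (by positivity)
end

section
/- Let M ≥ 1, let b ∈ ℂ^M have |b_k| = 1 for all k, and let φ ∈ ℝ be nondegenerate. If x ∈ X is any vector in the one-bit alphabet such that Re(e^{−iφ}·conj(b_k)·x_k) > 1/√2 for every k (i.e., the argument of conj(b_k)·x_k lies in (φ − π/4, φ + π/4) for all k), then x = x(φ). In other words, x(φ) is the unique element of X whose entries all fall in this angular window. -/
/-- The one-bit alphabet `X = {x : x_k ∈ {(±1 ± i)/√2} for all k}`. -/
noncomputable def oneBit (M : ℕ) : Set (Fin M → ℂ) :=
  {x | ∀ k, x k ∈ ({(1 + Complex.I) / Real.sqrt 2, (1 - Complex.I) / Real.sqrt 2,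
    (-1 + Complex.I) / Real.sqrt 2, (-1 - Complex.I) / Real.sqrt 2} : Set ℂ)}

lemma sgn_eq_of_pos_mul {s a : ℝ} (hs : s = 1 ∨ s = -1) (h : 0 < s * a) : sgn a = s := by
  unfold sgn
  rcases hs with rfl | rfl
  · rw [if_pos (by linarith)]
  · rw [if_neg (by linarith)]

lemma mul_le_one_of_abs_le_one {s a : ℝ} (hs : s = 1 ∨ s = -1) (ha : |a| ≤ 1) : s * a ≤ 1 := by
  rcases hs with rfl | rfl <;> linarith [abs_le.mp ha]

lemma csign_eq_of_one_lt_re_conj_mul {c : ℂ} (hc : ‖c‖ ≤ 1) {s t : ℝ}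
    (hs : s = 1 ∨ s = -1) (ht : t = 1 ∨ t = -1)
    (h : 1 < (starRingEnd ℂ c * (s + t * Complex.I)).re) :
    csign c = s + t * Complex.I := by
  have hsum : (starRingEnd ℂ c * (s + t * Complex.I)).re = s * c.re + t * c.im := by
    simp only [Complex.mul_re, Complex.conj_re, Complex.conj_im, Complex.add_re,
      Complex.add_im, Complex.ofReal_re, Complex.ofReal_im, Complex.mul_im,
      Complex.I_re, Complex.I_im]
    ring
  have hre := mul_le_one_of_abs_le_one hs ((Complex.abs_re_le_norm c).trans hc)
  have him := mul_le_one_of_abs_le_one ht ((Complex.abs_im_le_norm c).trans hc)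
  rw [csign, sgn_eq_of_pos_mul hs (by linarith), sgn_eq_of_pos_mul ht (by linarith)]

lemma exists_eq_of_mem_oneBit {M : ℕ} {x : Fin M → ℂ} (hx : x ∈ oneBit M) (k : Fin M) :
    ∃ s t : ℝ, (s = 1 ∨ s = -1) ∧ (t = 1 ∨ t = -1) ∧
      x k = (s + t * Complex.I) / Real.sqrt 2 := by
  rcases hx k with h | h | h | h <;> rw [h]
  · exact ⟨1, 1, .inl rfl, .inl rfl, by push_cast; ring⟩
  · exact ⟨1, -1, .inl rfl, .inr rfl, by push_cast; ring⟩
  · exact ⟨-1, 1, .inr rfl, .inl rfl, by push_cast; ring⟩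
  · exact ⟨-1, -1, .inr rfl, .inr rfl, by push_cast; ring⟩

lemma exp_neg_mul_I_mul_conj (φ : ℝ) (z : ℂ) :
    Complex.exp (-(φ : ℂ) * Complex.I) * starRingEnd ℂ z
      = starRingEnd ℂ (z * Complex.exp (φ * Complex.I)) := by
  rw [map_mul, ← Complex.exp_conj, map_mul, Complex.conj_ofReal, Complex.conj_I, mul_comm]
  ring_nf

theorem eq_xphi_of_aligned_general (M : ℕ) (b : Fin M → ℂ)
    (hb : ∀ k, ‖b k‖ = 1) (φ : ℝ)
    (x : Fin M → ℂ) (hx : x ∈ oneBit M)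
    (h : ∀ k, (Complex.exp (-(φ : ℂ) * Complex.I) * ((starRingEnd ℂ) (b k) * x k)).re
      > 1 / Real.sqrt 2) :
    x = xphi b φ := by
  funext k
  obtain ⟨s, t, hs, ht, hxk⟩ := exists_eq_of_mem_oneBit hx k
  set c := b k * Complex.exp (φ * Complex.I)
  have hc : ‖c‖ = 1 := by rw [norm_mul, hb k, Complex.norm_exp_ofReal_mul_I, one_mul]
  have hs2 : (0 : ℝ) < Real.sqrt 2 := by positivity
  have hk : 1 < (starRingEnd ℂ c * (s + t * Complex.I)).re := by
    have := h k
    rwa [← mul_assoc, exp_neg_mul_I_mul_conj, hxk, mul_div_assoc', Complex.div_ofReal_re,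
      gt_iff_lt, div_lt_div_iff_of_pos_right hs2] at this
  rw [xphi, csign_eq_of_one_lt_re_conj_mul hc.le hs ht hk, hxk]
  push_cast
  ring

/-- If `x ∈ X` satisfies `Re(e^{−iφ}·conj(b_k)·x_k) > 1/√2` for every `k`, then `x = x(φ)`:
`x(φ)` is the unique element of `X` whose entries all fall in the angular window
`(φ − π/4, φ + π/4)`. -/
theorem eq_xphi_of_aligned (M : ℕ) (hM : 1 ≤ M) (b : Fin M → ℂ)
    (hb : ∀ k, ‖b k‖ = 1) (φ : ℝ) (hφ : Nondeg b φ)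
    (x : Fin M → ℂ) (hx : x ∈ oneBit M)
    (h : ∀ k, (Complex.exp (-(φ : ℂ) * Complex.I) * ((starRingEnd ℂ) (b k) * x k)).re
      > 1 / Real.sqrt 2) :
    x = xphi b φ :=
  eq_xphi_of_aligned_general M b hb φ x hx h
end

section
/- Let A ∈ ℂ with A ≠ 0, and let c, c̃ ∈ ℂ with |c| = |c̃| = 1. If Re(conj(A)·c̃) > (√2/2)·|A| and Re(conj(A)·c) ≤ (√2/2)·|A|, then |A − c + c̃| > |A|. -/
open RCLike in
theorem norm_lt_norm_add_of_re_inner_pos {𝕜 E : Type*} [RCLike 𝕜] [NormedAddCommGroup E]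
    [InnerProductSpace 𝕜 E] {x y : E} (h : 0 < re (inner 𝕜 x y)) : ‖x‖ < ‖x + y‖ := by
  have hsq : ‖x‖ ^ 2 < ‖x + y‖ ^ 2 := by
    rw [norm_add_sq (𝕜 := 𝕜)]
    linarith [sq_nonneg ‖y‖]
  exact lt_of_pow_lt_pow_left₀ 2 (norm_nonneg _) hsq

theorem exchange_inequality_general (A c c' : ℂ)
    (h1 : ((starRingEnd ℂ) A * c').re > Real.sqrt 2 / 2 * ‖A‖)
    (h2 : ((starRingEnd ℂ) A * c).re ≤ Real.sqrt 2 / 2 * ‖A‖) :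
    ‖A - c + c'‖ > ‖A‖ := by
  have hinner : 0 < RCLike.re (inner ℂ A (c' - c)) := by
    rw [RCLike.inner_apply', mul_sub, RCLike.re_to_complex, Complex.sub_re]
    linarith
  calc ‖A‖ < ‖A + (c' - c)‖ := norm_lt_norm_add_of_re_inner_pos hinner
    _ = ‖A - c + c'‖ := by congr 1; ring

/-- Single-coordinate exchange inequality: if `|c| = |c̃| = 1`,
`Re(conj(A)·c̃) > (√2/2)·|A|` and `Re(conj(A)·c) ≤ (√2/2)·|A|`, then
`|A − c + c̃| > |A|`. -/
theorem exchange_inequality (A c c' : ℂ) (hA : A ≠ 0)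
    (hc : ‖c‖ = 1) (hc' : ‖c'‖ = 1)
    (h1 : ((starRingEnd ℂ) A * c').re > Real.sqrt 2 / 2 * ‖A‖)
    (h2 : ((starRingEnd ℂ) A * c).re ≤ Real.sqrt 2 / 2 * ‖A‖) :
    ‖A - c + c'‖ > ‖A‖ :=
  exchange_inequality_general A c c' h1 h2
end

section
/- (Proposition 2, part (a)) Let M ≥ 1, let b ∈ ℂ^M have |b_k| = 1 for all k, and let x* ∈ X maximize |Σ_{k=1}^{M} conj(b_k)·x_k| over all x ∈ X. If φ* = arg(Σ_{k=1}^{M} conj(b_k)·x*_k) is nondegenerate, then x* = x(φ*); in particular the maximizer belongs to the set X̃ = {x(φ) : φ nondegenerate}. -/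
/-!
Rotating the correlation `S = Σ_k conj(b_k) x*_k` by `e^{-iφ*}` turns `|S|` into the real
linear functional `Σ_k Re(conj(b_k e^{iφ*}) x*_k)`. Over the alphabet each summand is
maximized exactly at `x_k = sign(b_k e^{iφ*})/√2`, uniquely when `φ*` is nondegenerate. So if
`x* ≠ x(φ*)`, then `x(φ*)` strictly increases the functional, and its correlation has modulus
at least the functional's value, contradicting the maximality of `x*`.
-/

open ComplexConjugate

lemma mul_sgn_le_mul_sgn_self (a b : ℝ) : a * sgn b ≤ a * sgn a := by
  unfold sgn
  split_ifs <;> linarith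

lemma mul_sgn_lt_mul_sgn_self {a b : ℝ} (ha : a ≠ 0) (h : sgn b ≠ sgn a) :
    a * sgn b < a * sgn a := by
  unfold sgn at *
  rcases ha.lt_or_gt with ha | ha <;> split_ifs at * <;> first | linarith | exact absurd rfl h

lemma re_conj_mul_ofReal_mul_csign (c d : ℂ) (r : ℝ) :
    (conj c * (r * csign d)).re = r * (c.re * sgn d.re + c.im * sgn d.im) := by
  simp only [csign, Complex.mul_re, Complex.mul_im, Complex.add_re, Complex.add_im,
    Complex.conj_re, Complex.conj_im, Complex.ofReal_re, Complex.ofReal_im, Complex.I_re,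
    Complex.I_im]
  ring

lemma re_conj_mul_ofReal_mul_csign_le (c d : ℂ) {r : ℝ} (hr : 0 ≤ r) :
    (conj c * (r * csign d)).re ≤ (conj c * (r * csign c)).re := by
  rw [re_conj_mul_ofReal_mul_csign, re_conj_mul_ofReal_mul_csign]
  gcongr r * ?_
  linarith [mul_sgn_le_mul_sgn_self c.re d.re, mul_sgn_le_mul_sgn_self c.im d.im]

lemma re_conj_mul_ofReal_mul_csign_lt {c d : ℂ} {r : ℝ} (hr : 0 < r) (hre : c.re ≠ 0)
    (him : c.im ≠ 0) (h : csign d ≠ csign c) :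
    (conj c * (r * csign d)).re < (conj c * (r * csign c)).re := by
  have hsgn : sgn d.re ≠ sgn c.re ∨ sgn d.im ≠ sgn c.im := by
    by_contra! heq
    exact h (by rw [csign, csign, heq.1, heq.2])
  rw [re_conj_mul_ofReal_mul_csign, re_conj_mul_ofReal_mul_csign]
  refine mul_lt_mul_of_pos_left ?_ hr
  rcases hsgn with hs | hs
  · linarith [mul_sgn_lt_mul_sgn_self hre hs, mul_sgn_le_mul_sgn_self c.im d.im]
  · linarith [mul_sgn_le_mul_sgn_self c.re d.re, mul_sgn_lt_mul_sgn_self him hs]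

lemma mem_oneBit_iff {M : ℕ} {x : Fin M → ℂ} :
    x ∈ oneBit M ↔ ∀ k, ∃ c : ℂ, x k = ((1 / Real.sqrt 2 : ℝ) : ℂ) * csign c := by
  refine forall_congr' fun _ => ⟨fun hx => ?_, fun ⟨c, hc⟩ => ?_⟩
  · simp only [Set.mem_insert_iff, Set.mem_singleton_iff] at hx
    rcases hx with hx | hx | hx | hx
    · exact ⟨1 + Complex.I, by norm_num [hx, csign, sgn, div_eq_inv_mul]⟩
    · exact ⟨1 - Complex.I, by norm_num [hx, csign, sgn, div_eq_inv_mul, ← sub_eq_add_neg]⟩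
    · exact ⟨-1 + Complex.I, by norm_num [hx, csign, sgn, div_eq_inv_mul]⟩
    · exact ⟨-1 - Complex.I, by norm_num [hx, csign, sgn, div_eq_inv_mul, ← sub_eq_add_neg]⟩
  · rw [hc, csign, sgn, sgn]
    split_ifs <;> norm_num [div_eq_inv_mul, ← sub_eq_add_neg]

lemma xphi_mem_oneBit {M : ℕ} (b : Fin M → ℂ) (φ : ℝ) : xphi b φ ∈ oneBit M :=
  mem_oneBit_iff.2 fun _ => ⟨_, rfl⟩

lemma sum_re_conj_mul_lt_sum_re_conj_mul_csign {M : ℕ} {c x : Fin M → ℂ} (hx : x ∈ oneBit M)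
    (hc : ∀ k, (c k).re ≠ 0 ∧ (c k).im ≠ 0)
    (hne : x ≠ fun k => ((1 / Real.sqrt 2 : ℝ) : ℂ) * csign (c k)) :
    ∑ k, (conj (c k) * x k).re
      < ∑ k, (conj (c k) * (((1 / Real.sqrt 2 : ℝ) : ℂ) * csign (c k))).re := by
  obtain ⟨j, hj⟩ := Function.ne_iff.1 hne
  refine Finset.sum_lt_sum (fun k _ => ?_) ⟨j, Finset.mem_univ j, ?_⟩
  · obtain ⟨d, hd⟩ := mem_oneBit_iff.1 hx k
    rw [hd]
    exact re_conj_mul_ofReal_mul_csign_le (c k) d (by positivity)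
  · obtain ⟨d, hd⟩ := mem_oneBit_iff.1 hx j
    have hsign : csign d ≠ csign (c j) := fun h => hj (by rw [hd, h])
    rw [hd]
    exact re_conj_mul_ofReal_mul_csign_lt (by positivity) (hc j).1 (hc j).2 hsign

lemma conj_exp_arg_mul_I_mul_self (z : ℂ) :
    conj (Complex.exp (z.arg * Complex.I)) * z = ‖z‖ := by
  nth_rewrite 2 [← Complex.norm_mul_exp_arg_mul_I z]
  rw [mul_left_comm, Complex.conj_mul', Complex.norm_exp_ofReal_mul_I]
  simp

lemma sum_conj_mul_mul_eq_conj_mul_sum {M : ℕ} (b x : Fin M → ℂ) (u : ℂ) :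
    ∑ k, conj (b k * u) * x k = conj u * ∑ k, conj (b k) * x k := by
  simp only [Finset.mul_sum, map_mul]
  exact Finset.sum_congr rfl fun k _ => by ring

theorem maximizer_is_phase_aligned_general (M : ℕ) (b : Fin M → ℂ)
    (xs : Fin M → ℂ) (hxs : xs ∈ oneBit M)
    (hmax : ∀ x ∈ oneBit M, ‖∑ k, (starRingEnd ℂ) (b k) * x k‖
      ≤ ‖∑ k, (starRingEnd ℂ) (b k) * xs k‖)
    (hnd : Nondeg b (∑ k, (starRingEnd ℂ) (b k) * xs k).arg) :
    xs = xphi b (∑ k, (starRingEnd ℂ) (b k) * xs k).arg ∧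
      xs ∈ {x : Fin M → ℂ | ∃ φ : ℝ, Nondeg b φ ∧ x = xphi b φ} := by
  set S := ∑ k, conj (b k) * xs k
  set u := Complex.exp (S.arg * Complex.I)
  have hxs_eq : xs = xphi b S.arg := by
    by_contra hne
    have hlt : ∑ k, (conj (b k * u) * xs k).re < ∑ k, (conj (b k * u) * xphi b S.arg k).re :=
      sum_re_conj_mul_lt_sum_re_conj_mul_csign hxs hnd hne
    have hS : ∑ k, (conj (b k * u) * xs k).re = ‖S‖ := by
      rw [← Complex.re_sum, sum_conj_mul_mul_eq_conj_mul_sum, conj_exp_arg_mul_I_mul_self,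
        Complex.ofReal_re]
    have hrotated : ∑ k, (conj (b k * u) * xphi b S.arg k).re
        ≤ ‖∑ k, conj (b k) * xphi b S.arg k‖ := by
      rw [← Complex.re_sum, sum_conj_mul_mul_eq_conj_mul_sum]
      refine (Complex.re_le_norm _).trans_eq ?_
      rw [norm_mul, Complex.norm_conj, Complex.norm_exp_ofReal_mul_I, one_mul]
    linarith [hmax _ (xphi_mem_oneBit b S.arg)]
  exact ⟨hxs_eq, S.arg, hnd, hxs_eq⟩

/-- **Proposition 2, part (a).** If `x* ∈ X` maximizes `|Σ_k conj(b_k)·x_k|` over `X`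
and `φ* = arg(Σ_k conj(b_k)·x*_k)` is nondegenerate, then `x* = x(φ*)`; in particular
the maximizer belongs to `X̃ = {x(φ) : φ nondegenerate}`. -/
theorem maximizer_is_phase_aligned (M : ℕ) (hM : 1 ≤ M) (b : Fin M → ℂ)
    (hb : ∀ k, ‖b k‖ = 1) (xs : Fin M → ℂ) (hxs : xs ∈ oneBit M)
    (hmax : ∀ x ∈ oneBit M, ‖∑ k, (starRingEnd ℂ) (b k) * x k‖
      ≤ ‖∑ k, (starRingEnd ℂ) (b k) * xs k‖)
    (hnd : Nondeg b (∑ k, (starRingEnd ℂ) (b k) * xs k).arg) :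
    xs = xphi b (∑ k, (starRingEnd ℂ) (b k) * xs k).arg ∧
      xs ∈ {x : Fin M → ℂ | ∃ φ : ℝ, Nondeg b φ ∧ x = xphi b φ} :=
  maximizer_is_phase_aligned_general M b xs hxs hmax hnd
end

section
/- Let M ≥ 1 and let b ∈ ℂ^M have |b_k| = 1 for all k. Then the set X̃ = {x(φ) : φ ∈ ℝ nondegenerate} is finite and has at most 4M elements. -/
/-! Write `b_k = e^{iθ_k}`. For nondegenerate `φ` the entry `x(φ)_k` only records the open
quadrant containing `θ_k + φ`, i.e. `⌊(θ_k + φ) / (π/2)⌋` (`quadrantIndex`), and `x` is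
`2π`-periodic, so `φ` may be restricted to a window `[c, c + 2π)` starting at a quadrant
boundary of `θ_{k₀}`. On that window the vector of quadrant indices is monotone in `φ`, its
`k₀`-th coordinate takes four values and every other one at most five; a monotone family of
integer vectors is determined by its coordinate sums, which leaves room for `3 + 4(M - 1) + 1 = 4M`
vectors. -/

open Set Real

lemma sgn_eq_of_forall_mem_uIcc_ne_zero {f : ℝ → ℝ} (hf : Continuous f) {s t : ℝ}
    (h : ∀ u ∈ uIcc s t, f u ≠ 0) : sgn (f s) = sgn (f t) := by
  by_contra hne
  have h0 : (0 : ℝ) ∈ uIcc (f s) (f t) := by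
    unfold sgn at hne
    split_ifs at hne <;> simp only [mem_uIcc] <;> grind
  obtain ⟨u, hu, hu0⟩ := intermediate_value_uIcc hf.continuousOn h0
  exact h u hu hu0

lemma sgn_eq_of_floor_div_eq {f : ℝ → ℝ} (hf : Continuous f) {p : ℝ} (hp : 0 < p)
    (hzero : ∀ u, f u = 0 → ∃ n : ℤ, u = n * p) {s t : ℝ} (hs : f s ≠ 0) (ht : f t ≠ 0)
    (hst : ⌊s / p⌋ = ⌊t / p⌋) : sgn (f s) = sgn (f t) := by
  wlog hle : s ≤ t generalizing s t
  · exact (this ht hs hst.symm (le_of_not_ge hle)).symm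
  refine sgn_eq_of_forall_mem_uIcc_ne_zero hf fun u hu hu0 => hs ?_
  rw [uIcc_of_le hle] at hu
  obtain ⟨n, rfl⟩ := hzero _ hu0
  -- the zero `n * p` lies in `[s, t]`, whose endpoints have the same floor, so it is `s`
  have hn : n ≤ ⌊s / p⌋ := hst ▸ Int.le_floor.2 ((le_div_iff₀ hp).2 hu.2)
  have : (n : ℝ) * p ≤ s :=
    (le_div_iff₀ hp).1 ((Int.cast_le.2 hn).trans (Int.floor_le _))
  exact le_antisymm hu.1 this ▸ hu0

lemma Real.exists_int_eq_mul_half_pi_of_cos_eq_zero {u : ℝ} (h : cos u = 0) :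
    ∃ n : ℤ, u = n * (π / 2) := by
  obtain ⟨k, hk⟩ := Real.cos_eq_zero_iff.1 h
  exact ⟨2 * k + 1, by rw [hk]; push_cast; ring⟩

lemma Real.exists_int_eq_mul_half_pi_of_sin_eq_zero {u : ℝ} (h : sin u = 0) :
    ∃ n : ℤ, u = n * (π / 2) := by
  obtain ⟨k, hk⟩ := Real.sin_eq_zero_iff.1 h
  exact ⟨2 * k, by rw [← hk]; push_cast; ring⟩

lemma Complex.exp_mul_I_mul_exp_mul_I (θ φ : ℝ) :
    Complex.exp (θ * Complex.I) * Complex.exp (φ * Complex.I) =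
      Complex.exp ((θ + φ : ℝ) * Complex.I) := by
  rw [← Complex.exp_add]; push_cast; ring_nf

lemma encard_image_le_encard_image_of_factors {α β γ : Type*} {s : Set α} (F : α → β)
    (g : α → γ) (h : ∀ a ∈ s, ∀ b ∈ s, F a = F b → g a = g b) :
    (g '' s).encard ≤ (F '' s).encard := by
  classical
  obtain rfl | ⟨a₀, -⟩ := s.eq_empty_or_nonempty
  · simp
  have : Nonempty α := ⟨a₀⟩
  have hg : g '' s = (g ∘ Function.invFunOn F s) '' (F '' s) := by
    rw [image_image]
    refine image_congr fun a ha => ?_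
    have hex : ∃ b ∈ s, F b = F a := ⟨a, ha, rfl⟩
    exact (h _ (Function.invFunOn_mem hex) _ ha (Function.invFunOn_eq hex)).symm
  rw [hg]
  exact encard_image_le _ _

lemma encard_image_le_of_monotoneOn {α ι : Type*} [LinearOrder α] [Fintype ι]
    {f : α → ι → ℤ} {s : Set α} (hf : MonotoneOn f s) (lo : ι → ℤ) (d : ι → ℕ)
    (hbound : ∀ a ∈ s, ∀ k, lo k ≤ f a k ∧ f a k ≤ lo k + d k) :
    (f '' s).encard ≤ ∑ k, d k + 1 := by
  have hinj : InjOn (fun v : ι → ℤ => ∑ k, v k) (f '' s) := by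
    rintro _ ⟨a, ha, rfl⟩ _ ⟨b, hb, rfl⟩ hab
    wlog hle : a ≤ b generalizing a b
    · exact (this b hb a ha hab.symm (le_of_not_ge hle)).symm
    have hfab := hf ha hb hle
    funext k
    exact (Finset.sum_eq_sum_iff_of_le fun k _ => hfab k).1 hab k (Finset.mem_univ k)
  have hmaps : MapsTo (fun v : ι → ℤ => ∑ k, v k) (f '' s)
      (Finset.Icc (∑ k, lo k) (∑ k, lo k + ∑ k, (d k : ℤ))) := by
    rintro _ ⟨a, ha, rfl⟩
    rw [Finset.coe_Icc, mem_Icc, ← Finset.sum_add_distrib]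
    exact ⟨Finset.sum_le_sum fun k _ => (hbound a ha k).1,
      Finset.sum_le_sum fun k _ => (hbound a ha k).2⟩
  refine (encard_le_encard_of_injOn hmaps hinj).trans_eq ?_
  rw [encard_coe_eq_coe_finsetCard, Int.card_Icc, add_assoc, add_sub_cancel_left]
  norm_cast

noncomputable def quadrantIndex {M : ℕ} (θ : Fin M → ℝ) (φ : ℝ) : Fin M → ℤ :=
  fun k => ⌊(θ k + φ) / (π / 2)⌋

lemma quadrantIndex_monotone {M : ℕ} (θ : Fin M → ℝ) : Monotone (quadrantIndex θ) :=
  fun _ _ h _ => Int.floor_mono (div_le_div_of_nonneg_right (by linarith) (by positivity))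

lemma encard_image_quadrantIndex_Ico_le {M : ℕ} (θ : Fin M → ℝ) (k₀ : Fin M) :
    (quadrantIndex θ '' Ico (-θ k₀) (-θ k₀ + 2 * π)).encard ≤ 4 * M := by
  classical
  -- the window starts at a quadrant boundary of `θ k₀`, so that coordinate sees only 4 quadrants
  let d : Fin M → ℕ := Function.update (fun _ => 4) k₀ 3
  have hbound : ∀ φ ∈ Ico (-θ k₀) (-θ k₀ + 2 * π), ∀ k,
      ⌊(θ k - θ k₀) / (π / 2)⌋ ≤ quadrantIndex θ φ k ∧
        quadrantIndex θ φ k ≤ ⌊(θ k - θ k₀) / (π / 2)⌋ + d k := by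
    rintro φ ⟨hφ₁, hφ₂⟩ k
    have hpos : (0 : ℝ) < π / 2 := by positivity
    set u := (φ + θ k₀) / (π / 2)
    have hu₀ : 0 ≤ u := div_nonneg (by linarith) hpos.le
    have hu₄ : u < 4 := by rw [div_lt_iff₀ hpos]; linarith
    have hsplit : (θ k + φ) / (π / 2) = (θ k - θ k₀) / (π / 2) + u := by
      rw [← add_div]; ring_nf
    simp only [quadrantIndex, hsplit]
    refine ⟨Int.floor_mono (by linarith), ?_⟩
    rcases eq_or_ne k k₀ with rfl | hk
    · have : ⌊u⌋ < 4 := Int.floor_lt.2 (by exact_mod_cast hu₄)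
      simp only [sub_self, zero_div, zero_add, Int.floor_zero, d, Function.update_self]
      omega
    · calc ⌊(θ k - θ k₀) / (π / 2) + u⌋ ≤ ⌊(θ k - θ k₀) / (π / 2) + (4 : ℕ)⌋ :=
            Int.floor_mono (by push_cast; linarith)
        _ = ⌊(θ k - θ k₀) / (π / 2)⌋ + d k := by simp [d, hk]
  refine (encard_image_le_of_monotoneOn
    ((quadrantIndex_monotone θ).monotoneOn _) _ d hbound).trans ?_
  have hsum : ∑ k, d k + 1 = 4 * M := by
    have := k₀.pos
    simp only [Finset.mem_univ, Finset.sum_update_of_mem, Finset.sum_const, Finset.card_sdiff,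
      Finset.card_univ, Fintype.card_fin, Finset.inter_univ, Finset.card_singleton, smul_eq_mul, d]
    omega
  exact_mod_cast hsum.le

variable {M : ℕ} {b : Fin M → ℂ}

lemma xphi_eq_of_quadrantIndex_eq {θ : Fin M → ℝ}
    (hθ : ∀ k, Complex.exp (θ k * Complex.I) = b k) {φ ψ : ℝ} (hφ : Nondeg b φ)
    (hψ : Nondeg b ψ) (h : quadrantIndex θ φ = quadrantIndex θ ψ) : xphi b φ = xphi b ψ := by
  funext k
  have hk : ⌊(θ k + φ) / (π / 2)⌋ = ⌊(θ k + ψ) / (π / 2)⌋ := congrFun h k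
  have hpos : (0 : ℝ) < π / 2 := by positivity
  simp only [Nondeg, ← hθ, Complex.exp_mul_I_mul_exp_mul_I, Complex.exp_ofReal_mul_I_re,
    Complex.exp_ofReal_mul_I_im] at hφ hψ
  simp only [xphi, csign, ← hθ k, Complex.exp_mul_I_mul_exp_mul_I, Complex.exp_ofReal_mul_I_re,
    Complex.exp_ofReal_mul_I_im]
  rw [sgn_eq_of_floor_div_eq continuous_cos hpos
      (fun _ => exists_int_eq_mul_half_pi_of_cos_eq_zero) (hφ k).1 (hψ k).1 hk,
    sgn_eq_of_floor_div_eq continuous_sin hpos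
      (fun _ => exists_int_eq_mul_half_pi_of_sin_eq_zero) (hφ k).2 (hψ k).2 hk]

lemma setOf_xphi_subset_image_Ico (c : ℝ) :
    {x | ∃ φ : ℝ, Nondeg b φ ∧ x = xphi b φ} ⊆
      xphi b '' ({φ | Nondeg b φ} ∩ Ico c (c + 2 * π)) := by
  rintro _ ⟨φ, hφ, rfl⟩
  obtain ⟨ψ, hψ, he⟩ := Circle.periodic_exp.exists_mem_Ico two_pi_pos φ c
  replace he := congrArg ((↑) : Circle → ℂ) he
  rw [Circle.coe_exp, Circle.coe_exp] at he
  refine ⟨ψ, ⟨fun k => he ▸ hφ k, hψ⟩, ?_⟩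
  unfold xphi
  rw [he]

/-- The set `X̃ = {x(φ) : φ nondegenerate}` is finite with at most `4M` elements. -/
theorem xphi_range_finite_card_le (M : ℕ) (hM : 1 ≤ M) (b : Fin M → ℂ)
    (hb : ∀ k, ‖b k‖ = 1) :
    {x : Fin M → ℂ | ∃ φ : ℝ, Nondeg b φ ∧ x = xphi b φ}.Finite ∧
      {x : Fin M → ℂ | ∃ φ : ℝ, Nondeg b φ ∧ x = xphi b φ}.ncard ≤ 4 * M := by
  choose θ hθ using fun k => (Complex.norm_eq_one_iff (b k)).1 (hb k)
  let k₀ : Fin M := ⟨0, hM⟩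
  let window := Ico (-θ k₀) (-θ k₀ + 2 * π)
  have hcard : {x : Fin M → ℂ | ∃ φ : ℝ, Nondeg b φ ∧ x = xphi b φ}.encard ≤ 4 * M :=
    calc _ ≤ (xphi b '' ({φ | Nondeg b φ} ∩ window)).encard :=
          encard_le_encard (setOf_xphi_subset_image_Ico _)
      _ ≤ (quadrantIndex θ '' ({φ | Nondeg b φ} ∩ window)).encard :=
          encard_image_le_encard_image_of_factors _ _ fun _ hφ _ hψ =>
            xphi_eq_of_quadrantIndex_eq hθ hφ.1 hψ.1
      _ ≤ (quadrantIndex θ '' window).encard := encard_le_encard (image_mono inter_subset_right)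
      _ ≤ 4 * M := encard_image_quadrantIndex_Ico_le θ k₀
  exact encard_le_coe_iff_finite_ncard_le.1 (mod_cast hcard)
end

section
/- Any four points z_1, z_2, z_3, z_4 in the closed disk {z ∈ ℂ : |z| ≤ R} (R > 0) contain two distinct indices j ≠ k with |z_j − z_k| ≤ √2·R; i.e., the minimum pairwise distance of any four points in a disk of radius R is at most √2·R. -/
/-!
Two points `a, b` of the disk with `⟪a, b⟫ ≥ 0` satisfy
`‖a - b‖² = ‖a‖² + ‖b‖² - 2⟪a, b⟫ ≤ 2R²`, so it suffices that among any four vectors of `ℝ²`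
two make a non-obtuse angle. More generally, at most `n + 1` vectors of an `n`-dimensional
real inner product space can be pairwise obtuse: if `v₀, …, vₘ` are, then `v₁, …, vₘ` are
linearly independent. Indeed, split a relation `∑ gᵢ vᵢ = 0` as `P = ∑ gᵢ⁺ vᵢ = ∑ gᵢ⁻ vᵢ`;
expanding `⟪P, P⟫` with one factor written each way gives only cross terms `⟪vᵢ, vⱼ⟫`, `i ≠ j`,
so `P = 0`, and then `0 = ⟪P, v₀⟫ = ∑ gᵢ⁺ ⟪vᵢ, v₀⟫` forces `g⁺ = 0`, and likewise `g⁻ = 0`.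
-/

open Module RealInnerProductSpace

section PairwiseObtuse

variable {E : Type*} [NormedAddCommGroup E] [InnerProductSpace ℝ E] {ι : Type*} [Fintype ι]

theorem linearIndependent_of_pairwise_inner_neg {v : ι → E} {w : E}
    (hv : Pairwise fun i j => ⟪v i, v j⟫ < 0) (hw : ∀ i, ⟪v i, w⟫ < 0) :
    LinearIndependent ℝ v := by
  rw [Fintype.linearIndependent_iff]
  intro g hg
  have eq_zero_of_nonneg : ∀ c : ι → ℝ, 0 ≤ c → ∑ i, c i • v i = 0 → c = 0 := by
    intro c hc hsum
    have hterms : ∀ i ∈ Finset.univ, c i * ⟪v i, w⟫ ≤ 0 := fun i _ =>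
      mul_nonpos_of_nonneg_of_nonpos (hc i) (hw i).le
    have hzero : ∑ i, c i * ⟪v i, w⟫ = 0 := by
      simpa only [sum_inner, real_inner_smul_left, inner_zero_left] using congrArg (⟪·, w⟫) hsum
    funext i
    have hterm := (Finset.sum_eq_zero_iff_of_nonpos hterms).1 hzero i (Finset.mem_univ i)
    exact (mul_eq_zero.1 hterm).resolve_right (hw i).ne
  have hsplit : ∑ i, g⁺ i • v i = ∑ i, g⁻ i • v i := by
    rw [← sub_eq_zero, ← Finset.sum_sub_distrib]
    simpa only [← sub_smul, Pi.posPart_apply, Pi.negPart_apply, posPart_sub_negPart] using hg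
  have hpos : ∑ i, g⁺ i • v i = 0 := by
    rw [← real_inner_self_nonpos]
    nth_rewrite 2 [hsplit]
    simp only [sum_inner, inner_sum, real_inner_smul_left, real_inner_smul_right]
    refine Finset.sum_nonpos fun i _ => Finset.sum_nonpos fun j _ => ?_
    obtain rfl | hij := eq_or_ne i j
    · rcases le_total (g i) 0 with h | h
      · simp [posPart_eq_zero.2 h]
      · simp [negPart_eq_zero.2 h]
    · exact mul_nonpos_of_nonneg_of_nonpos (negPart_nonneg _)
        (mul_nonpos_of_nonneg_of_nonpos (posPart_nonneg _) (hv hij.symm).le)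
  have hgpos := eq_zero_of_nonneg _ (posPart_nonneg g) hpos
  have hgneg := eq_zero_of_nonneg _ (negPart_nonneg g) (hsplit ▸ hpos)
  intro i
  rw [← posPart_sub_negPart g, hgpos, hgneg, sub_zero, Pi.zero_apply]

theorem card_le_finrank_add_one_of_pairwise_inner_neg [FiniteDimensional ℝ E] {v : ι → E}
    (hv : Pairwise fun i j => ⟪v i, v j⟫ < 0) : Fintype.card ι ≤ finrank ℝ E + 1 := by
  classical
  cases isEmpty_or_nonempty ι with
  | inl _ => simp
  | inr h =>
    obtain ⟨i₀⟩ := h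
    have hli : LinearIndependent ℝ fun i : {i // i ≠ i₀} => v i :=
      linearIndependent_of_pairwise_inner_neg (fun i j hij => hv (Subtype.coe_ne_coe.2 hij))
        fun i => hv i.2
    have hcard := hli.fintype_card_le_finrank
    simp only [ne_eq, Fintype.card_subtype_compl, Fintype.card_subtype_eq] at hcard
    omega

theorem exists_ne_inner_nonneg_of_finrank_add_one_lt [FiniteDimensional ℝ E] (v : ι → E)
    (hcard : finrank ℝ E + 1 < Fintype.card ι) : ∃ i j, i ≠ j ∧ 0 ≤ ⟪v i, v j⟫ := by
  by_contra! h
  exact (card_le_finrank_add_one_of_pairwise_inner_neg fun i j hij => h i j hij).not_gt hcard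

end PairwiseObtuse

theorem norm_sub_le_sqrt_two_mul_of_inner_nonneg {F : Type*} [NormedAddCommGroup F]
    [InnerProductSpace ℝ F] {a b : F} {R : ℝ} (ha : ‖a‖ ≤ R) (hb : ‖b‖ ≤ R)
    (hab : 0 ≤ ⟪a, b⟫) : ‖a - b‖ ≤ √2 * R := by
  have hR : 0 ≤ R := (norm_nonneg a).trans ha
  have hsq : ‖a - b‖ ^ 2 ≤ (√2 * R) ^ 2 := by
    rw [norm_sub_sq_real, mul_pow, Real.sq_sqrt zero_le_two]
    nlinarith [norm_nonneg a, norm_nonneg b]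
  exact (pow_le_pow_iff_left₀ (norm_nonneg _) (by positivity) two_ne_zero).1 hsq

theorem four_points_in_disk_general (R : ℝ) (z : Fin 4 → ℂ)
    (hz : ∀ j, ‖z j‖ ≤ R) :
    ∃ j k, j ≠ k ∧ ‖z j - z k‖ ≤ Real.sqrt 2 * R := by
  obtain ⟨j, k, hjk, hinner⟩ := exists_ne_inner_nonneg_of_finrank_add_one_lt z
    (by simp [Complex.finrank_real_complex])
  exact ⟨j, k, hjk, norm_sub_le_sqrt_two_mul_of_inner_nonneg (hz j) (hz k) hinner⟩

/-- Any four points in the closed disk of radius `R > 0` centered at `0` in `ℂ` contain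
two distinct indices whose points are at distance at most `√2·R`. -/
theorem four_points_in_disk (R : ℝ) (hR : 0 < R) (z : Fin 4 → ℂ)
    (hz : ∀ j, ‖z j‖ ≤ R) :
    ∃ j k, j ≠ k ∧ ‖z j - z k‖ ≤ Real.sqrt 2 * R :=
  four_points_in_disk_general R z hz
end
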